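/- Let f : ℝ^{n×m} → ℝ be continuously differentiable, λ > 0, μ > 0. Fix (Ū, V̄) ∈ ℝ^{n×r} × ℝ^{m×r}. Then a pair (G, H) ∈ ℝ^{n×r} × ℝ^{m×r} belongs to the regular (Fréchet) subdifferential of Φ_{λ,μ} at (Ū, V̄) if and only if G_j = ∇f(Ū V̄ᵀ) V̄_j + μ Ū_j for every column index j with Ū_j ≠ 0 and H_j = (∇f(Ū V̄ᵀ))ᵀ Ū_j + μ V̄_j for every column index j with V̄_j ≠ 0 (the remaining columns of G and H are arbitrary). -/

import Mathlib

open Filter Topology Matrix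

attribute [local instance] Matrix.frobeniusSeminormedAddCommGroup
  Matrix.frobeniusNormedAddCommGroup Matrix.frobeniusNormedSpace

/-- The Frobenius (trace) inner product `⟨A,B⟩ = trace(AᵀB) = ∑ᵢⱼ Aᵢⱼ Bᵢⱼ` on matrices. -/
noncomputable def frobInner {α β : Type*} [Fintype α] [Fintype β] (A B : Matrix α β ℝ) : ℝ :=
  ∑ i, ∑ j, A i j * B i j

/-- The column `ℓ_{2,0}`-norm: the number of nonzero columns. -/
noncomputable def l20 {α β : Type*} [Fintype α] [Fintype β] (A : Matrix α β ℝ) : ℕ :=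
  {j : β | (fun i => A i j) ≠ 0}.ncard

/-- `Φ_{λ,μ}(U,V) = f(UVᵀ) + (μ/2)(‖U‖_F² + ‖V‖_F²) + λ(‖U‖_{2,0} + ‖V‖_{2,0})`. -/
noncomputable def Phi {n m r : ℕ} (f : Matrix (Fin n) (Fin m) ℝ → ℝ) (lam mu : ℝ)
    (U : Matrix (Fin n) (Fin r) ℝ) (V : Matrix (Fin m) (Fin r) ℝ) : ℝ :=
  f (U * Vᵀ) + mu / 2 * (frobInner U U + frobInner V V) + lam * ((l20 U : ℝ) + (l20 V : ℝ))

/-- The regular (Fréchet) subdifferential of a function on a product of two matrix spaces,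
with respect to the Frobenius inner product and norm of the pair. -/
noncomputable def regularSubdiffP {n m r : ℕ}
    (h : Matrix (Fin n) (Fin r) ℝ × Matrix (Fin m) (Fin r) ℝ → ℝ)
    (x : Matrix (Fin n) (Fin r) ℝ × Matrix (Fin m) (Fin r) ℝ) :
    Set (Matrix (Fin n) (Fin r) ℝ × Matrix (Fin m) (Fin r) ℝ) :=
  {v | (0 : EReal) ≤ Filter.liminf
      (fun x' => (((h x' - h x - (frobInner v.1 (x'.1 - x.1) + frobInner v.2 (x'.2 - x.2))) /
          Real.sqrt (frobInner (x'.1 - x.1) (x'.1 - x.1) +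
            frobInner (x'.2 - x.2) (x'.2 - x.2)) : ℝ) : EReal))
      (𝓝[≠] x)}

/-!
`Φ` is the sum of the smooth part `g(U,V) = f(UVᵀ) + (μ/2)(‖U‖² + ‖V‖²)`, whose gradient at
`(Ū,V̄)` is `(∇f(ŪV̄ᵀ)V̄ + μŪ, ∇f(ŪV̄ᵀ)ᵀŪ + μV̄)`, and the penalty `λ(‖U‖_{2,0} + ‖V‖_{2,0})`.
Adding a differentiable function shifts the regular subdifferential by its gradient, so it remains
to see that the regular subgradients of the penalty at `(Ū,V̄)` are exactly the pairs vanishing on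
the nonzero columns of `Ū` and of `V̄`. Perturbing inside the nonzero columns leaves the penalty
locally constant, which forces a subgradient to vanish there. Conversely, near `(Ū,V̄)` no nonzero
column disappears; either no new one appears, and then the linear term vanishes, or the penalty
jumps by at least `λ > 0`, which dominates the (small) linear term.
-/

section FrobInner

variable {α β : Type*} [Fintype α] [Fintype β]

lemma frobInner_eq_trace (A B : Matrix α β ℝ) : frobInner A B = trace (Aᵀ * B) := by
  simp only [frobInner, trace, diag, mul_apply, transpose_apply]
  exact Finset.sum_comm

lemma frobInner_comm (A B : Matrix α β ℝ) : frobInner A B = frobInner B A := by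
  simp only [frobInner, mul_comm]

lemma frobInner_transpose (A B : Matrix α β ℝ) : frobInner Aᵀ Bᵀ = frobInner A B := by
  simp only [frobInner, transpose_apply]
  exact Finset.sum_comm

lemma frobInner_add_left (A B C : Matrix α β ℝ) :
    frobInner (A + B) C = frobInner A C + frobInner B C := by
  simp only [frobInner, Matrix.add_apply, add_mul, Finset.sum_add_distrib]

lemma frobInner_smul_left (c : ℝ) (A B : Matrix α β ℝ) :
    frobInner (c • A) B = c * frobInner A B := by
  simp only [frobInner, Matrix.smul_apply, smul_eq_mul, Finset.mul_sum, mul_assoc]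

lemma frobInner_add_right (A B C : Matrix α β ℝ) :
    frobInner A (B + C) = frobInner A B + frobInner A C := by
  rw [frobInner_comm, frobInner_add_left, frobInner_comm B, frobInner_comm C]

lemma frobInner_smul_right (c : ℝ) (A B : Matrix α β ℝ) :
    frobInner A (c • B) = c * frobInner A B := by
  rw [frobInner_comm, frobInner_smul_left, frobInner_comm]

lemma frobInner_sub_left (A B C : Matrix α β ℝ) :
    frobInner (A - B) C = frobInner A C - frobInner B C := by
  simp only [frobInner, Matrix.sub_apply, sub_mul, Finset.sum_sub_distrib]

lemma frobInner_self_eq_norm_sq (A : Matrix α β ℝ) : frobInner A A = ‖A‖ ^ 2 := by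
  rw [frobenius_norm_def, ← Real.rpow_natCast, ← Real.rpow_mul (by positivity)]
  norm_num [frobInner, sq]

lemma frobInner_single_right [DecidableEq α] [DecidableEq β] (A : Matrix α β ℝ) (i : α) (j : β)
    (c : ℝ) : frobInner A (single i j c) = c * A i j := by
  simp [frobInner, single, ite_and, Finset.sum_ite_eq, mul_comm]

lemma frobInner_mul_transpose_right {γ : Type*} [Fintype γ] (C : Matrix α β ℝ)
    (A : Matrix α γ ℝ) (B : Matrix β γ ℝ) : frobInner C (A * Bᵀ) = frobInner (C * B) A := by
  rw [frobInner_eq_trace, frobInner_eq_trace, ← Matrix.mul_assoc, trace_mul_comm, transpose_mul,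
    Matrix.mul_assoc]

lemma frobInner_mul_transpose_right' {γ : Type*} [Fintype γ] (C : Matrix α β ℝ)
    (A : Matrix α γ ℝ) (B : Matrix β γ ℝ) : frobInner C (A * Bᵀ) = frobInner (Cᵀ * A) B := by
  rw [← frobInner_transpose, transpose_mul, transpose_transpose, frobInner_mul_transpose_right]

noncomputable def frobInnerL : Matrix α β ℝ →L[ℝ] Matrix α β ℝ →L[ℝ] ℝ :=
  (LinearMap.mk₂ ℝ frobInner frobInner_add_left frobInner_smul_left frobInner_add_right
    frobInner_smul_right).toContinuousBilinearMap

end FrobInner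

section ColSupport

variable {α β : Type*}

def colSupport (A : Matrix α β ℝ) : Set β := {j | (fun i => A i j) ≠ 0}

lemma apply_eq_zero_of_notMem_colSupport {A : Matrix α β ℝ} {j : β} (hj : j ∉ colSupport A)
    (i : α) : A i j = 0 :=
  congrFun (not_not.mp hj) i

lemma single_apply_of_notMem_colSupport [DecidableEq α] [DecidableEq β] {A : Matrix α β ℝ}
    {j j' : β} (hj : j ∈ colSupport A) (hj' : j' ∉ colSupport A) (i i' : α) (c : ℝ) :
    single i j c i' j' = 0 :=
  single_apply_of_col_ne i i' (ne_of_mem_of_not_mem hj hj') c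

lemma eventually_colSupport_subset [Finite β] (U : Matrix α β ℝ) :
    ∀ᶠ U' in 𝓝 U, colSupport U ⊆ colSupport U' := by
  have hcol : ∀ j ∈ colSupport U, ∀ᶠ U' in 𝓝 U, j ∈ colSupport U' := by
    intro j hj
    obtain ⟨i, hi⟩ := Function.ne_iff.mp hj
    filter_upwards [(continuous_id.matrix_elem i j).continuousAt.eventually_ne hi] with U' hU' h
    exact hU' (congrFun h i)
  exact (eventually_all_finite (Set.toFinite _)).mpr hcol

variable [Fintype α] [Fintype β]

lemma l20_eq_ncard_colSupport (A : Matrix α β ℝ) : l20 A = (colSupport A).ncard := rfl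

lemma eventually_l20_add_smul_eq {U D : Matrix α β ℝ}
    (hD : ∀ j ∉ colSupport U, ∀ i, D i j = 0) :
    ∀ᶠ t in 𝓝 (0 : ℝ), l20 (U + t • D) = l20 U := by
  have hpath : Tendsto (fun t : ℝ => U + t • D) (𝓝 0) (𝓝 U) := by
    have hcont : Continuous fun t : ℝ => U + t • D := by fun_prop
    simpa using hcont.tendsto 0
  filter_upwards [hpath.eventually (eventually_colSupport_subset U)] with t ht
  have hsub : colSupport (U + t • D) ⊆ colSupport U := fun j => by
    contrapose
    intro hj h
    exact h (funext fun i => by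
      simp [apply_eq_zero_of_notMem_colSupport hj, hD j hj])
  exact congrArg Set.ncard (hsub.antisymm ht)

lemma eventually_frobInner_sub_le_l20 {U W : Matrix α β ℝ}
    (hW : ∀ j ∈ colSupport U, ∀ i, W i j = 0) {lam : ℝ} (hlam : 0 < lam) :
    ∀ᶠ U' in 𝓝 U, frobInner W (U' - U) ≤ lam * ((l20 U' : ℝ) - l20 U) := by
  have hsmall : ∀ᶠ U' in 𝓝 U, frobInner W (U' - U) < lam := by
    have hcont : ContinuousAt (fun U' => frobInner W (U' - U)) U :=
      ((frobInnerL W).continuous.comp (continuous_sub_right U)).continuousAt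
    exact hcont.eventually_lt continuousAt_const (by simpa [frobInner] using hlam)
  filter_upwards [eventually_colSupport_subset U, hsmall] with U' hsub hlt
  rcases hsub.eq_or_ssubset with heq | hss
  · have hzero : frobInner W (U' - U) = 0 := by
      refine Finset.sum_eq_zero fun i _ => Finset.sum_eq_zero fun j _ => ?_
      by_cases hj : j ∈ colSupport U
      · simp [hW j hj i]
      · simp [apply_eq_zero_of_notMem_colSupport hj,
          apply_eq_zero_of_notMem_colSupport (heq ▸ hj : j ∉ colSupport U')]
    simp [hzero, l20_eq_ncard_colSupport, heq]
  · have hlt' : l20 U < l20 U' := Set.ncard_lt_ncard hss (Set.toFinite _)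
    have hjump : (l20 U : ℝ) + 1 ≤ l20 U' := by exact_mod_cast hlt'
    nlinarith

end ColSupport

section Pair

variable {α β γ δ : Type*} [Fintype α] [Fintype β] [Fintype γ] [Fintype δ]

noncomputable def pairInner (v d : Matrix α γ ℝ × Matrix β δ ℝ) : ℝ :=
  frobInner v.1 d.1 + frobInner v.2 d.2

/-- The Euclidean norm of the pair, as in `regularSubdiffP`; Mathlib's norm on a product is the
maximum of the two norms. -/
noncomputable def pairNorm (d : Matrix α γ ℝ × Matrix β δ ℝ) : ℝ :=
  √(frobInner d.1 d.1 + frobInner d.2 d.2)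

lemma pairInner_sub_left (v w d : Matrix α γ ℝ × Matrix β δ ℝ) :
    pairInner (v - w) d = pairInner v d - pairInner w d := by
  simp only [pairInner, Prod.fst_sub, Prod.snd_sub, frobInner_sub_left]
  ring

lemma pairInner_smul_right (t : ℝ) (v d : Matrix α γ ℝ × Matrix β δ ℝ) :
    pairInner v (t • d) = t * pairInner v d := by
  simp only [pairInner, Prod.smul_fst, Prod.smul_snd, frobInner_smul_right]
  ring

lemma pairNorm_smul (t : ℝ) (d : Matrix α γ ℝ × Matrix β δ ℝ) :
    pairNorm (t • d) = |t| * pairNorm d := by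
  simp only [pairNorm, Prod.smul_fst, Prod.smul_snd, frobInner_smul_left, frobInner_smul_right]
  rw [← Real.sqrt_sq_eq_abs, ← Real.sqrt_mul (sq_nonneg t)]
  ring_nf

lemma pairNorm_nonneg (d : Matrix α γ ℝ × Matrix β δ ℝ) : 0 ≤ pairNorm d := Real.sqrt_nonneg _

lemma norm_le_pairNorm (d : Matrix α γ ℝ × Matrix β δ ℝ) : ‖d‖ ≤ pairNorm d := by
  rw [Prod.norm_def, pairNorm, frobInner_self_eq_norm_sq, frobInner_self_eq_norm_sq]
  exact max_le (Real.le_sqrt_of_sq_le (by nlinarith [sq_nonneg ‖d.2‖]))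
    (Real.le_sqrt_of_sq_le (by nlinarith [sq_nonneg ‖d.1‖]))

lemma pairNorm_pos {d : Matrix α γ ℝ × Matrix β δ ℝ} (hd : d ≠ 0) : 0 < pairNorm d :=
  (norm_pos_iff.mpr hd).trans_le (norm_le_pairNorm d)

end Pair

lemma zero_le_liminf_coe_iff {ι : Type*} {F : Filter ι} (u : ι → ℝ) :
    (0 : EReal) ≤ liminf (fun y => (u y : EReal)) F ↔ ∀ ε > 0, ∀ᶠ y in F, -ε ≤ u y := by
  rw [le_liminf_iff']
  refine ⟨fun H ε hε => ?_, fun H c hc => ?_⟩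
  · filter_upwards [H (-ε : ℝ) (by exact_mod_cast neg_neg_of_pos hε)] with y hy
    exact_mod_cast hy
  · induction c using EReal.rec with
    | bot => exact Eventually.of_forall fun _ => bot_le
    | coe c =>
      filter_upwards [H (-c) (by linarith [EReal.coe_lt_coe_iff.mp hc])] with y hy
      exact EReal.coe_le_coe_iff.mpr (by linarith)
    | top => exact absurd hc (not_lt.mpr le_top)

lemma eventually_neg_mul_le_add {ι : Type*} {F : Filter ι} {A R N : ι → ℝ}
    (hA : ∀ ε > 0, ∀ᶠ y in F, -(ε * N y) ≤ A y)
    (hR : ∀ ε > 0, ∀ᶠ y in F, |R y| ≤ ε * N y) :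
    ∀ ε > 0, ∀ᶠ y in F, -(ε * N y) ≤ A y + R y := by
  intro ε hε
  filter_upwards [hA (ε / 2) (half_pos hε), hR (ε / 2) (half_pos hε)] with y hAy hRy
  linarith [(abs_le.mp hRy).1]

section RegularSubdiff

variable {n m r : ℕ} {h : Matrix (Fin n) (Fin r) ℝ × Matrix (Fin m) (Fin r) ℝ → ℝ}
  {x v : Matrix (Fin n) (Fin r) ℝ × Matrix (Fin m) (Fin r) ℝ}

lemma mem_regularSubdiffP_iff : v ∈ regularSubdiffP h x ↔
    ∀ ε > 0, ∀ᶠ y in 𝓝[≠] x, -(ε * pairNorm (y - x)) ≤ h y - h x - pairInner v (y - x) := by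
  refine (zero_le_liminf_coe_iff _).trans (forall₂_congr fun ε _ => ?_)
  refine eventually_congr (eventually_nhdsWithin_of_forall fun y hy => ?_)
  rw [← neg_mul]
  exact le_div_iff₀ (pairNorm_pos (sub_ne_zero.mpr hy))

lemma mem_regularSubdiffP_of_eventually_le
    (hv : ∀ᶠ y in 𝓝 x, pairInner v (y - x) ≤ h y - h x) : v ∈ regularSubdiffP h x :=
  mem_regularSubdiffP_iff.mpr fun ε hε => by
    filter_upwards [eventually_nhdsWithin_of_eventually_nhds hv] with y hy
    nlinarith [pairNorm_nonneg (y - x)]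

lemma pairInner_nonpos_of_mem_regularSubdiffP (hv : v ∈ regularSubdiffP h x)
    {d : Matrix (Fin n) (Fin r) ℝ × Matrix (Fin m) (Fin r) ℝ}
    (hd : ∀ᶠ t in 𝓝[>] (0 : ℝ), h (x + t • d) ≤ h x) : pairInner v d ≤ 0 := by
  rcases eq_or_ne d 0 with rfl | hd0
  · simp [pairInner, frobInner]
  have hpath : Tendsto (fun t : ℝ => x + t • d) (𝓝[>] 0) (𝓝[≠] x) := by
    have hcont : Continuous fun t : ℝ => x + t • d := by fun_prop
    refine tendsto_nhdsWithin_iff.mpr ⟨?_, eventually_nhdsWithin_of_forall fun t ht => ?_⟩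
    · simpa using hcont.continuousWithinAt.tendsto (x := (0 : ℝ)) (s := Set.Ioi 0)
    · simpa using smul_ne_zero (Set.mem_Ioi.mp ht).ne' hd0
  have hslope : ∀ ε > 0, pairInner v d ≤ ε * pairNorm d := by
    intro ε hε
    obtain ⟨t, ⟨hdt, ht⟩, hεt⟩ := ((hd.and self_mem_nhdsWithin).and
      (hpath.eventually (mem_regularSubdiffP_iff.mp hv ε hε))).exists
    simp only [add_sub_cancel_left, pairNorm_smul, pairInner_smul_right,
      abs_of_pos (show (0 : ℝ) < t from ht)] at hεt
    nlinarith
  have hlim : Tendsto (fun ε : ℝ => ε * pairNorm d) (𝓝[>] 0) (𝓝 0) := by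
    have hcont : Continuous fun ε : ℝ => ε * pairNorm d := by fun_prop
    simpa using (hcont.tendsto 0).mono_left nhdsWithin_le_nhds
  exact ge_of_tendsto hlim (eventually_nhdsWithin_of_forall hslope)

lemma mem_regularSubdiffP_add_iff {g p : Matrix (Fin n) (Fin r) ℝ × Matrix (Fin m) (Fin r) ℝ → ℝ}
    {D : Matrix (Fin n) (Fin r) ℝ × Matrix (Fin m) (Fin r) ℝ →L[ℝ] ℝ}
    {w : Matrix (Fin n) (Fin r) ℝ × Matrix (Fin m) (Fin r) ℝ}
    (hg : HasFDerivAt g D x) (hD : ∀ d, D d = pairInner w d) :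
    v ∈ regularSubdiffP (fun y => g y + p y) x ↔ v - w ∈ regularSubdiffP p x := by
  have hR : ∀ ε > 0, ∀ᶠ y in 𝓝[≠] x,
      |g y - g x - pairInner w (y - x)| ≤ ε * pairNorm (y - x) := fun ε hε => by
    filter_upwards [eventually_nhdsWithin_of_eventually_nhds (hg.isLittleO.bound hε)] with y hy
    rw [← hD, ← Real.norm_eq_abs]
    exact hy.trans (mul_le_mul_of_nonneg_left (norm_le_pairNorm _) hε.le)
  have hsplit : ∀ y, g y + p y - (g x + p x) - pairInner v (y - x) =
      p y - p x - pairInner (v - w) (y - x) + (g y - g x - pairInner w (y - x)) := fun y => by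
    rw [pairInner_sub_left]; ring
  simp only [mem_regularSubdiffP_iff, hsplit]
  refine ⟨fun H => ?_, fun H => eventually_neg_mul_le_add H hR⟩
  intro ε hε
  filter_upwards [eventually_neg_mul_le_add H (fun ε hε => (hR ε hε).mono fun y hy => by
    rwa [abs_neg]) ε hε] with y hy
  linarith

lemma mem_regularSubdiffP_l20_iff {lam : ℝ} (hlam : 0 < lam) {U : Matrix (Fin n) (Fin r) ℝ}
    {V : Matrix (Fin m) (Fin r) ℝ} :
    v ∈ regularSubdiffP (fun p => lam * ((l20 p.1 : ℝ) + l20 p.2)) (U, V) ↔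
      (∀ j ∈ colSupport U, ∀ i, v.1 i j = 0) ∧ (∀ j ∈ colSupport V, ∀ i, v.2 i j = 0) := by
  constructor
  · intro hv
    have hdir : ∀ d : Matrix (Fin n) (Fin r) ℝ × Matrix (Fin m) (Fin r) ℝ,
        (∀ j ∉ colSupport U, ∀ i, d.1 i j = 0) → (∀ j ∉ colSupport V, ∀ i, d.2 i j = 0) →
        pairInner v d ≤ 0 := fun d hd₁ hd₂ =>
      pairInner_nonpos_of_mem_regularSubdiffP hv <| eventually_nhdsWithin_of_eventually_nhds <| by
        filter_upwards [eventually_l20_add_smul_eq hd₁, eventually_l20_add_smul_eq hd₂]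
          with t h₁ h₂
        simp [h₁, h₂]
    refine ⟨fun j hj i => ?_, fun j hj i => ?_⟩
    · have key := fun c : ℝ => hdir (single i j c, 0)
        (fun _ hj' i' => single_apply_of_notMem_colSupport hj hj' i i' c) (by simp)
      simp only [pairInner, frobInner_single_right] at key
      linarith [key 1, key (-1), show frobInner v.2 0 = 0 by simp [frobInner]]
    · have key := fun c : ℝ => hdir (0, single i j c) (by simp)
        (fun _ hj' i' => single_apply_of_notMem_colSupport hj hj' i i' c)
      simp only [pairInner, frobInner_single_right] at key
      linarith [key 1, key (-1), show frobInner v.1 0 = 0 by simp [frobInner]]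
  · rintro ⟨hv₁, hv₂⟩
    refine mem_regularSubdiffP_of_eventually_le ?_
    filter_upwards [(continuous_fst.tendsto (U, V)).eventually
        (eventually_frobInner_sub_le_l20 hv₁ hlam),
      (continuous_snd.tendsto (U, V)).eventually (eventually_frobInner_sub_le_l20 hv₂ hlam)]
      with y h₁ h₂
    simp only [pairInner, Prod.fst_sub, Prod.snd_sub] at h₁ h₂ ⊢
    linarith

end RegularSubdiff

lemma hasFDerivAt_comp_mul_transpose_add_frobInner_self {α β γ : Type*}
    [Fintype α] [Fintype β] [Fintype γ]
    {f : Matrix α β ℝ → ℝ} {U : Matrix α γ ℝ} {V : Matrix β γ ℝ}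
    {Df : Matrix α β ℝ →L[ℝ] ℝ} {Gf : Matrix α β ℝ} (hf : HasFDerivAt f Df (U * Vᵀ))
    (hGf : ∀ H, Df H = frobInner Gf H) (mu : ℝ) :
    ∃ D : Matrix α γ ℝ × Matrix β γ ℝ →L[ℝ] ℝ,
      HasFDerivAt (fun p => f (p.1 * p.2ᵀ) + mu / 2 * (frobInner p.1 p.1 + frobInner p.2 p.2))
        D (U, V) ∧
      ∀ d, D d = pairInner (Gf * V + mu • U, Gfᵀ * U + mu • V) d := by
  let mulT : Matrix α γ ℝ →L[ℝ] Matrix β γ ℝ →L[ℝ] Matrix α β ℝ :=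
    (LinearMap.mk₂ ℝ (fun A B => A * Bᵀ) (fun A B C => Matrix.add_mul A B Cᵀ)
      (fun c A B => Matrix.smul_mul c A Bᵀ) (fun A B C => by simp [Matrix.mul_add])
      (fun c A B => by simp)).toContinuousBilinearMap
  have hmulT := mulT.hasFDerivAt_of_bilinear (hasFDerivAt_fst (p := (U, V))) hasFDerivAt_snd
  have hU := (frobInnerL (α := α) (β := γ)).hasFDerivAt_of_bilinear
    (hasFDerivAt_fst (p := (U, V))) hasFDerivAt_fst
  have hV := (frobInnerL (α := β) (β := γ)).hasFDerivAt_of_bilinear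
    (hasFDerivAt_snd (p := (U, V))) hasFDerivAt_snd
  refine ⟨_, (hf.comp (U, V) hmulT).add ((hU.add hV).const_mul (mu / 2)), fun d => ?_⟩
  change Df (U * d.2ᵀ + d.1 * Vᵀ) + mu / 2 * ((frobInner U d.1 + frobInner d.1 U) +
    (frobInner V d.2 + frobInner d.2 V)) = _
  rw [hGf, frobInner_add_right, frobInner_mul_transpose_right' Gf U d.2,
    frobInner_mul_transpose_right Gf d.1 V, frobInner_comm d.1, frobInner_comm d.2]
  simp only [pairInner, frobInner_add_left, frobInner_smul_left]
  ring

theorem mem_regularSubdiff_Phi_iff_general {n m r : ℕ}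
    (f : Matrix (Fin n) (Fin m) ℝ → ℝ) (f' : Matrix (Fin n) (Fin m) ℝ → Matrix (Fin n) (Fin m) ℝ)
    (hdiff : Differentiable ℝ f)
    (hgrad : ∀ X H, fderiv ℝ f X H = frobInner (f' X) H)
    (lam mu : ℝ) (hlam : 0 < lam)
    (Ubar : Matrix (Fin n) (Fin r) ℝ) (Vbar : Matrix (Fin m) (Fin r) ℝ)
    (G : Matrix (Fin n) (Fin r) ℝ) (H : Matrix (Fin m) (Fin r) ℝ) :
    (G, H) ∈ regularSubdiffP (fun p => Phi f lam mu p.1 p.2) (Ubar, Vbar) ↔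
      ((∀ j : Fin r, (fun i => Ubar i j) ≠ 0 →
          ∀ i, G i j = (f' (Ubar * Vbarᵀ) * Vbar) i j + mu * Ubar i j) ∧
        (∀ j : Fin r, (fun i => Vbar i j) ≠ 0 →
          ∀ i, H i j = ((f' (Ubar * Vbarᵀ))ᵀ * Ubar) i j + mu * Vbar i j)) := by
  obtain ⟨D, hD, hDgrad⟩ := hasFDerivAt_comp_mul_transpose_add_frobInner_self
    (hdiff (Ubar * Vbarᵀ)).hasFDerivAt (hgrad _) mu
  refine (mem_regularSubdiffP_add_iff (p := fun p => lam * ((l20 p.1 : ℝ) + l20 p.2)) hD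
    hDgrad).trans ?_
  rw [mem_regularSubdiffP_l20_iff hlam]
  simp only [colSupport, Set.mem_ofPred_eq, Prod.fst_sub, Prod.snd_sub, Matrix.sub_apply,
    Matrix.add_apply, Matrix.smul_apply, smul_eq_mul, sub_eq_zero]

/-- `(G,H) ∈ ∂̂Φ_{λ,μ}(Ū,V̄)` iff `G_j = ∇f(ŪV̄ᵀ)V̄_j + μŪ_j` for every nonzero
column index `j` of `Ū` and `H_j = (∇f(ŪV̄ᵀ))ᵀŪ_j + μV̄_j` for every nonzero column index
`j` of `V̄` (remaining columns arbitrary). -/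
theorem mem_regularSubdiff_Phi_iff {n m r : ℕ}
    (f : Matrix (Fin n) (Fin m) ℝ → ℝ) (f' : Matrix (Fin n) (Fin m) ℝ → Matrix (Fin n) (Fin m) ℝ)
    (hdiff : Differentiable ℝ f)
    (hgrad : ∀ X H, fderiv ℝ f X H = frobInner (f' X) H)
    (hcont : Continuous f')
    (lam mu : ℝ) (hlam : 0 < lam) (hmu : 0 < mu)
    (Ubar : Matrix (Fin n) (Fin r) ℝ) (Vbar : Matrix (Fin m) (Fin r) ℝ)
    (G : Matrix (Fin n) (Fin r) ℝ) (H : Matrix (Fin m) (Fin r) ℝ) :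
    (G, H) ∈ regularSubdiffP (fun p => Phi f lam mu p.1 p.2) (Ubar, Vbar) ↔
      ((∀ j : Fin r, (fun i => Ubar i j) ≠ 0 →
          ∀ i, G i j = (f' (Ubar * Vbarᵀ) * Vbar) i j + mu * Ubar i j) ∧
        (∀ j : Fin r, (fun i => Vbar i j) ≠ 0 →
          ∀ i, H i j = ((f' (Ubar * Vbarᵀ))ᵀ * Ubar) i j + mu * Vbar i j)) :=
  mem_regularSubdiff_Phi_iff_general f f' hdiff hgrad lam mu hlam Ubar Vbar G H
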